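/- For every real number a with 0 ≤ a ≤ 1/2 and every x > 0, one has arctan x > (1 + a)·x/(a + √(1 + x²)). -/

import Mathlib

/-!
For `a = 1/2` this is Shafer's inequality `arctan x > 3x / (1 + 2√(1 + x²))`. The difference
`arctan t - (1 + a) t / (a + √(1 + t²))` vanishes at `0`, so it suffices that its derivative is
positive for `t > 0`. With `s = √(1 + t²) > 1` this becomes `(1 + a)(a s + 1) s < (a + s)²`, and the
difference of the two sides factors as `(s - 1)((1 - a - a²) s - a²)`, whose second factor exceeds
`(1 - 2a)(1 + a) ≥ 0`.
-/

open Real Set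

noncomputable def shaferBound (a t : ℝ) : ℝ := (1 + a) * t / (a + √(1 + t ^ 2))

noncomputable def shaferBoundDeriv (a t : ℝ) : ℝ :=
  (1 + a) * (a * √(1 + t ^ 2) + 1) / (√(1 + t ^ 2) * (a + √(1 + t ^ 2)) ^ 2)

lemma hasDerivAt_sqrt_one_add_sq (t : ℝ) :
    HasDerivAt (fun u : ℝ => √(1 + u ^ 2)) (t / √(1 + t ^ 2)) t := by
  refine (((hasDerivAt_pow 2 t).const_add 1).sqrt (by positivity)).congr_deriv ?_
  field_simp
  ring

lemma one_lt_sqrt_one_add_sq {t : ℝ} (ht : t ≠ 0) : 1 < √(1 + t ^ 2) := by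
  rw [lt_sqrt zero_le_one]
  linarith [pow_pos (abs_pos.2 ht) 2, sq_abs t]

lemma one_add_mul_mul_lt_add_sq {a s : ℝ} (ha0 : -1 ≤ a) (ha1 : a ≤ 1 / 2) (hs : 1 < s) :
    (1 + a) * (a * s + 1) * s < (a + s) ^ 2 := by
  have hc : 0 < 1 - a - a ^ 2 := by nlinarith
  have hfactor : 0 < (1 - a - a ^ 2) * s - a ^ 2 := by
    nlinarith [mul_nonneg (by linarith : (0 : ℝ) ≤ 1 - 2 * a) (by linarith : (0 : ℝ) ≤ 1 + a)]
  nlinarith [mul_pos (sub_pos.2 hs) hfactor]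

lemma hasDerivAt_shaferBound {a : ℝ} (ha : -1 < a) (t : ℝ) :
    HasDerivAt (shaferBound a) (shaferBoundDeriv a t) t := by
  have hs : 1 ≤ √(1 + t ^ 2) := one_le_sqrt.2 (by nlinarith)
  have hs2 : √(1 + t ^ 2) ^ 2 = 1 + t ^ 2 := sq_sqrt (by positivity)
  have hden : a + √(1 + t ^ 2) ≠ 0 := by linarith
  refine (((hasDerivAt_id' t).const_mul (1 + a)).fun_div
    ((hasDerivAt_sqrt_one_add_sq t).const_add a) hden).congr_deriv ?_
  rw [shaferBoundDeriv]
  field_simp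
  linear_combination (1 + a) * hs2

lemma shaferBoundDeriv_lt {a t : ℝ} (ha0 : -1 < a) (ha1 : a ≤ 1 / 2) (ht : t ≠ 0) :
    shaferBoundDeriv a t < 1 / (1 + t ^ 2) := by
  have hs := one_lt_sqrt_one_add_sq ht
  have key := one_add_mul_mul_lt_add_sq ha0.le ha1 hs
  have hs2 : √(1 + t ^ 2) ^ 2 = 1 + t ^ 2 := sq_sqrt (by positivity)
  rw [shaferBoundDeriv]
  set s := √(1 + t ^ 2)
  rw [← hs2, div_lt_div_iff₀ (mul_pos (by linarith) (pow_pos (by linarith) 2)) (by positivity)]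
  nlinarith [mul_lt_mul_of_pos_left key (by linarith : 0 < s)]

lemma strictMonoOn_arctan_sub_shaferBound {a : ℝ} (ha0 : -1 < a) (ha1 : a ≤ 1 / 2) :
    StrictMonoOn (fun t => arctan t - shaferBound a t) (Ici 0) := by
  have hderiv (t : ℝ) := (hasDerivAt_arctan t).sub (hasDerivAt_shaferBound ha0 t)
  refine strictMonoOn_of_hasDerivWithinAt_pos (convex_Ici 0)
    (fun t _ => (hderiv t).continuousAt.continuousWithinAt)
    (fun t _ => (hderiv t).hasDerivWithinAt) fun t ht => ?_
  rw [interior_Ici] at ht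
  exact sub_pos.2 (shaferBoundDeriv_lt ha0 ha1 ht.ne')

theorem arctan_gt_of_mem_Icc (a : ℝ) (ha0 : 0 ≤ a) (ha1 : a ≤ 1 / 2) (x : ℝ) (hx : 0 < x) :
    Real.arctan x > (1 + a) * x / (a + Real.sqrt (1 + x ^ 2)) := by
  have h := strictMonoOn_arctan_sub_shaferBound (by linarith) ha1 self_mem_Ici hx.le hx
  simp only [shaferBound, arctan_zero, mul_zero, zero_div, sub_zero] at h
  exact sub_pos.1 h
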